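/- Let y be a grid state and let a and b be functions to ℕ on the index sets of A(·) and B(·). If the triple (a,b,y) is A-plausible and D ∈ 𝒟⁺(x,y) is a positive domain with A(D) = a and B(D) = b, then there exist a state z, a positive domain E ∈ 𝒟⁺(x,z), and an A-witness R ∈ ℛ(z,y) for (a,y) such that E∗R = D. Moreover, z, E, R may be chosen so that R minimizes the pair (ω(R), τ(R)), ordered lexicographically, among all A-witnesses (over all states z') for (a,y). -/

import Mathlib

/-! Grid diagram combinatorics: the complex of positive domains `CD₊`. -/

/-- A domain on the `n × n` toroidal grid from grid state `x` to grid state `y`,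
avoiding the distinguished top-right square. -/
def IsGridDomain (n : ℕ) (x y : Equiv.Perm (ZMod n)) (D : ZMod n → ZMod n → ℤ) : Prop :=
  D ((n : ZMod n) - 1) ((n : ZMod n) - 1) = 0 ∧
    ∀ i j : ZMod n,
      D i j - D (i - 1) j - D i (j - 1) + D (i - 1) (j - 1) =
        (if x i = j then 1 else 0) - (if y i = j then 1 else 0)

/-- A positive domain from `x` to `y`. -/
def IsGridPosDomain (n : ℕ) (x y : Equiv.Perm (ZMod n)) (D : ZMod n → ZMod n → ℤ) : Prop :=
  IsGridDomain n x y D ∧ ∀ i j : ZMod n, 0 ≤ D i j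

/-- Membership in the cyclic interval `[a, b)` of `ZMod n`. -/
def cycInt (n : ℕ) (a b i : ZMod n) : Prop :=
  ∃ k : ℕ, k < (b - a).val ∧ i = a + (k : ZMod n)

/-- A rectangle from `x` to `y`. -/
def IsGridRect (n : ℕ) (x y : Equiv.Perm (ZMod n)) (R : ZMod n → ZMod n → ℤ) : Prop :=
  IsGridPosDomain n x y R ∧
    ∃ i₁ i₂ : ZMod n, i₁ ≠ i₂ ∧
      y = x * Equiv.swap i₁ i₂ ∧
      (∀ i j : ZMod n,
        (cycInt n i₁ i₂ i ∧ cycInt n (x i₁) (x i₂) j → R i j = 1) ∧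
        (¬(cycInt n i₁ i₂ i ∧ cycInt n (x i₁) (x i₂) j) → R i j = 0)) ∧
      ∀ i : ZMod n, i ≠ i₁ → i ≠ i₂ → cycInt n i₁ i₂ i → ¬ cycInt n (x i₁) (x i₂) (x i)

/-- The horizontal annulus through row `j`. -/
def annH (n : ℕ) (j : ZMod n) : ZMod n → ZMod n → ℤ := fun _ j' => if j' = j then 1 else 0

/-- The vertical annulus through column `i`. -/
def annV (n : ℕ) (i : ZMod n) : ZMod n → ZMod n → ℤ := fun i' _ => if i' = i then 1 else 0

/-- `A(D)`: multiplicities of `D` in the rightmost column. -/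
def colA (n : ℕ) (D : ZMod n → ZMod n → ℤ) : {j : ZMod n // j ≠ (n : ZMod n) - 1} → ℤ :=
  fun j => D ((n : ZMod n) - 1) j.1

/-- `B(D)`: multiplicities of `D` in the topmost row. -/
def rowB (n : ℕ) (D : ZMod n → ZMod n → ℤ) : {i : ZMod n // i ≠ (n : ZMod n) - 1} → ℤ :=
  fun i => D i.1 ((n : ZMod n) - 1)

/-- An A-witness for `(a, y)`: a rectangle `R` ending at `y` with `0 < A(R) ≤ a`. -/
def AWitness (n : ℕ) (a : {j : ZMod n // j ≠ (n : ZMod n) - 1} → ℕ)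
    (y z : Equiv.Perm (ZMod n)) (R : ZMod n → ZMod n → ℤ) : Prop :=
  IsGridRect n z y R ∧ colA n R ≠ 0 ∧ ∀ j, colA n R j ≤ (a j : ℤ)

/-- `(a, b, y)` is A-plausible: there is an A-witness for `(a, y)`. -/
def APlausible (n : ℕ) (a : {j : ZMod n // j ≠ (n : ZMod n) - 1} → ℕ)
    (y : Equiv.Perm (ZMod n)) : Prop :=
  ∃ (z : Equiv.Perm (ZMod n)) (R : ZMod n → ZMod n → ℤ), AWitness n a y z R

/-- `ω(R)`: the number of columns other than the rightmost one that `R` intersects. -/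
noncomputable def omegaR (n : ℕ) (R : ZMod n → ZMod n → ℤ) : ℕ :=
  {i : ZMod n | i ≠ (n : ZMod n) - 1 ∧ ∃ j, R i j ≠ 0}.ncard

/-- `τ(R)`: the number of columns that `R` intersects (the horizontal width). -/
noncomputable def tauR (n : ℕ) (R : ZMod n → ZMod n → ℤ) : ℕ :=
  {i : ZMod n | ∃ j, R i j ≠ 0}.ncard

namespace GridAux

variable {n : ℕ}

lemma castval [NeZero n] (m : ℕ) (hm : m < 2*n) :
    ((m : ZMod n)).val = if m < n then m else m - n := by
  split_ifs with h
  · exact ZMod.val_cast_of_lt h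
  · have h2 : ((m - n + n : ℕ) : ZMod n) = ((m - n : ℕ) : ZMod n) := by
      push_cast [ZMod.natCast_self]; ring
    rw [show m - n + n = m by omega] at h2
    rw [h2, ZMod.val_cast_of_lt (by omega)]

lemma neg_one_cast [NeZero n] (hn : 1 ≤ n) : ((n - 1 : ℕ) : ZMod n) = (-1 : ZMod n) := by
  have h1 : ((n : ℕ) : ZMod n) = 0 := ZMod.natCast_self n
  have h2 : ((n - 1 : ℕ) : ZMod n) + 1 = ((n : ℕ) : ZMod n) := by
    rw [show (n : ℕ) = (n-1) + 1 by omega]; push_cast; ring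
  rw [h1] at h2; linear_combination h2

lemma val_neg_one [NeZero n] (hn : 1 ≤ n) : (-1 : ZMod n).val = n - 1 := by
  rw [← neg_one_cast hn, ZMod.val_cast_of_lt (by omega)]

lemma cast_inj_lt [NeZero n] {s t : ℕ} (hs : s < n) (ht : t < n) :
    ((s : ZMod n) = (t : ZMod n)) ↔ s = t := by
  constructor
  · intro h
    have := congrArg ZMod.val h
    rwa [ZMod.val_cast_of_lt hs, ZMod.val_cast_of_lt ht] at this
  · rintro rfl; rfl

lemma cast_val_eq [NeZero n] (i : ZMod n) : ((i.val : ℕ) : ZMod n) = i :=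
  ZMod.natCast_rightInverse i

/-- interval [β, α) with β < α < n -/
lemma cyc1 [NeZero n] {β α : ℕ} (hβα : β < α) (hαn : α < n) (j : ZMod n) :
    cycInt n (β : ZMod n) (α : ZMod n) j ↔ (β ≤ j.val ∧ j.val < α) := by
  have hsub : ((α : ZMod n) - (β : ZMod n)).val = α - β := by
    have h0 : (α : ZMod n) - (β : ZMod n) = ((α - β : ℕ) : ZMod n) := by
      push_cast [Nat.cast_sub (le_of_lt hβα)]; ring
    rw [h0, ZMod.val_cast_of_lt (by omega)]
  constructor
  · rintro ⟨k, hk, rfl⟩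
    rw [hsub] at hk
    have h0 : ((β : ZMod n) + (k : ZMod n)) = ((β + k : ℕ) : ZMod n) := by push_cast; ring
    rw [h0, ZMod.val_cast_of_lt (by omega)]
    omega
  · rintro ⟨h1, h2⟩
    refine ⟨j.val - β, by rw [hsub]; omega, ?_⟩
    have h0 : (β : ZMod n) + ((j.val - β : ℕ) : ZMod n) = ((β + (j.val - β) : ℕ) : ZMod n) := by
      push_cast; ring
    rw [h0, show β + (j.val - β) = j.val by omega, cast_val_eq]

/-- interval [p, q) wrapping, with q < p < n -/
lemma cyc2 [NeZero n] {q p : ℕ} (hqp : q < p) (hpn : p < n) (i : ZMod n) :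
    cycInt n (p : ZMod n) (q : ZMod n) i ↔ (p ≤ i.val ∨ i.val < q) := by
  have hsub : ((q : ZMod n) - (p : ZMod n)).val = n + q - p := by
    have h0 : ((n + q - p : ℕ) : ZMod n) = (q : ZMod n) - (p : ZMod n) := by
      rw [Nat.cast_sub (by omega)]; push_cast [ZMod.natCast_self]; ring
    rw [← h0, ZMod.val_cast_of_lt (by omega)]
  constructor
  · rintro ⟨k, hk, rfl⟩
    rw [hsub] at hk
    have hcast : ((p : ZMod n) + (k : ZMod n)) = ((p + k : ℕ) : ZMod n) := by push_cast; ring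
    rw [hcast, castval (p+k) (by omega)]
    split_ifs with h <;> omega
  · intro h
    rcases h with h | h
    · refine ⟨i.val - p, by rw [hsub]; have := ZMod.val_lt i; omega, ?_⟩
      have h0 : (p : ZMod n) + ((i.val - p : ℕ) : ZMod n) = ((p + (i.val - p) : ℕ) : ZMod n) := by
        push_cast; ring
      rw [h0, show p + (i.val - p) = i.val by omega, cast_val_eq]
    · refine ⟨n + i.val - p, by rw [hsub]; omega, ?_⟩
      have h0 : (p : ZMod n) + ((n + i.val - p : ℕ) : ZMod n) = ((n + i.val : ℕ) : ZMod n) := by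
        rw [Nat.cast_sub (by omega)]; push_cast; ring
      have h1 : ((n + i.val : ℕ) : ZMod n) = ((i.val : ℕ) : ZMod n) := by
        push_cast [ZMod.natCast_self]; ring
      rw [h0, h1, cast_val_eq]

end GridAux
namespace GridAux

variable {n : ℕ}

lemma tele1 (g : ZMod n → ℤ) (j : ZMod n) (L : ℕ) :
    ∑ v ∈ Finset.range (L+1), (g (j + (v:ZMod n)) - g (j + (v:ZMod n) - 1)) =
      g (j + (L:ZMod n)) - g (j - 1) := by
  induction L with
  | zero => simp
  | succ L ih =>
    rw [Finset.sum_range_succ, ih]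
    have h1 : j + ((L+1 : ℕ) : ZMod n) - 1 = j + (L : ZMod n) := by push_cast; ring
    rw [h1]; ring

lemma tele2 (F : ZMod n → ZMod n → ℤ) (i j : ZMod n) (K L : ℕ) :
    ∑ u ∈ Finset.range (K+1), ∑ v ∈ Finset.range (L+1),
      (F (i+(u:ZMod n)) (j+(v:ZMod n)) - F (i+(u:ZMod n)-1) (j+(v:ZMod n))
        - F (i+(u:ZMod n)) (j+(v:ZMod n)-1) + F (i+(u:ZMod n)-1) (j+(v:ZMod n)-1)) =
    F (i+(K:ZMod n)) (j+(L:ZMod n)) - F (i-1) (j+(L:ZMod n))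
      - F (i+(K:ZMod n)) (j-1) + F (i-1) (j-1) := by
  have step : ∀ w : ZMod n, ∑ v ∈ Finset.range (L+1),
      (F w (j+(v:ZMod n)) - F w (j+(v:ZMod n)-1)) = F w (j+(L:ZMod n)) - F w (j-1) :=
    fun w => tele1 (F w) j L
  calc ∑ u ∈ Finset.range (K+1), ∑ v ∈ Finset.range (L+1),
      (F (i+(u:ZMod n)) (j+(v:ZMod n)) - F (i+(u:ZMod n)-1) (j+(v:ZMod n))
        - F (i+(u:ZMod n)) (j+(v:ZMod n)-1) + F (i+(u:ZMod n)-1) (j+(v:ZMod n)-1))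
      = ∑ u ∈ Finset.range (K+1),
          ((F (i+(u:ZMod n)) (j+(L:ZMod n)) - F (i+(u:ZMod n)) (j-1))
            - (F (i+(u:ZMod n)-1) (j+(L:ZMod n)) - F (i+(u:ZMod n)-1) (j-1))) := by
        refine Finset.sum_congr rfl fun u _ => ?_
        rw [show ∑ v ∈ Finset.range (L+1),
            (F (i+(u:ZMod n)) (j+(v:ZMod n)) - F (i+(u:ZMod n)-1) (j+(v:ZMod n))
              - F (i+(u:ZMod n)) (j+(v:ZMod n)-1) + F (i+(u:ZMod n)-1) (j+(v:ZMod n)-1)) =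
          ∑ v ∈ Finset.range (L+1),
            ((F (i+(u:ZMod n)) (j+(v:ZMod n)) - F (i+(u:ZMod n)) (j+(v:ZMod n)-1))
              - (F (i+(u:ZMod n)-1) (j+(v:ZMod n)) - F (i+(u:ZMod n)-1) (j+(v:ZMod n)-1)))
          from Finset.sum_congr rfl fun v _ => by ring]
        rw [Finset.sum_sub_distrib, step, step]
    _ = _ := by
        rw [tele1 (fun w => F w (j+(L:ZMod n)) - F w (j-1)) i K]; ring

lemma box {x y : Equiv.Perm (ZMod n)} {D : ZMod n → ZMod n → ℤ}
    (hD : ∀ i j : ZMod n, D i j - D (i-1) j - D i (j-1) + D (i-1) (j-1) =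
      (if x i = j then 1 else 0) - (if y i = j then 1 else 0))
    (i j : ZMod n) (K L : ℕ)
    (hy : ∀ u ≤ K, ∀ v ≤ L, y (i + (u:ZMod n)) ≠ j + (v:ZMod n)) :
    0 ≤ D (i+(K:ZMod n)) (j+(L:ZMod n)) - D (i-1) (j+(L:ZMod n))
      - D (i+(K:ZMod n)) (j-1) + D (i-1) (j-1) := by
  rw [← tele2]
  refine Finset.sum_nonneg fun u hu => Finset.sum_nonneg fun v hv => ?_
  rw [hD]
  rw [if_neg (hy u (by simpa using Nat.lt_succ_iff.mp (Finset.mem_range.mp hu))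
    v (by simpa using Nat.lt_succ_iff.mp (Finset.mem_range.mp hv)))]
  split_ifs <;> norm_num

lemma card_val_filter [NeZero n] (P : ℕ → Prop) [DecidablePred P] :
    (Finset.univ.filter (fun i : ZMod n => P i.val)).card = ((Finset.range n).filter P).card := by
  refine Finset.card_bij' (fun a _ => a.val) (fun t _ => (t : ZMod n)) ?_ ?_ ?_ ?_
  · intro a ha
    have ha' := (Finset.mem_filter.mp ha).2
    exact Finset.mem_filter.mpr ⟨Finset.mem_range.mpr (ZMod.val_lt a), ha'⟩
  · intro t ht
    have ht' := Finset.mem_filter.mp ht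
    refine Finset.mem_filter.mpr ⟨Finset.mem_univ _, ?_⟩
    rw [ZMod.val_cast_of_lt (Finset.mem_range.mp ht'.1)]
    exact ht'.2
  · intro a _; exact cast_val_eq a
  · intro t ht
    exact ZMod.val_cast_of_lt (Finset.mem_range.mp (Finset.mem_filter.mp ht).1)

lemma card_tau [NeZero n] {q p : ℕ} (hqp : q < p) (hpn : p < n) :
    (Finset.univ.filter (fun i : ZMod n => p ≤ i.val ∨ i.val < q)).card = (n - p) + q := by
  rw [card_val_filter (fun t => p ≤ t ∨ t < q)]
  have he : (Finset.range n).filter (fun t => p ≤ t ∨ t < q) =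
      (Finset.Ico p n) ∪ (Finset.range q) := by
    ext t
    simp only [Finset.mem_filter, Finset.mem_range, Finset.mem_union, Finset.mem_Ico]
    omega
  rw [he, Finset.card_union_of_disjoint (by
    rw [Finset.disjoint_left]
    intro t h1 h2
    simp only [Finset.mem_range, Finset.mem_Ico] at *
    omega)]
  rw [Nat.card_Ico, Finset.card_range]

lemma card_omega [NeZero n] {q p : ℕ} (hqp : q < p) (hpn : p < n) :
    (Finset.univ.filter (fun i : ZMod n => (p ≤ i.val ∨ i.val < q) ∧ i.val ≠ n-1)).card
      = (n - 1 - p) + q := by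
  rw [card_val_filter (fun t => (p ≤ t ∨ t < q) ∧ t ≠ n-1)]
  have he : (Finset.range n).filter (fun t => (p ≤ t ∨ t < q) ∧ t ≠ n-1) =
      (Finset.Ico p (n-1)) ∪ (Finset.range q) := by
    ext t
    simp only [Finset.mem_filter, Finset.mem_range, Finset.mem_union, Finset.mem_Ico]
    omega
  rw [he, Finset.card_union_of_disjoint (by
    rw [Finset.disjoint_left]
    intro t h1 h2
    simp only [Finset.mem_range, Finset.mem_Ico] at *
    omega)]
  rw [Nat.card_Ico, Finset.card_range]

end GridAux
namespace GridAux

variable {n : ℕ}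

def phiv (n : ℕ) (y : Equiv.Perm (ZMod n)) (t : ℕ) : ℕ := (y (t : ZMod n)).val

def NW (n : ℕ) (y : Equiv.Perm (ZMod n)) (D : ZMod n → ZMod n → ℤ) (q p : ℕ) : Prop :=
  q < p ∧ p < n ∧ phiv n y q < phiv n y p ∧
  (∀ s : ℕ, phiv n y q ≤ s → s < phiv n y p → 1 ≤ D (-1) (s : ZMod n)) ∧
  (∀ t : ℕ, t < n → (t < q ∨ p < t) →
    ¬(phiv n y q ≤ phiv n y t ∧ phiv n y t < phiv n y p))

def stdR (n q p β α : ℕ) : ZMod n → ZMod n → ℤ :=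
  fun i j => (if p ≤ i.val ∨ i.val < q then (1:ℤ) else 0) *
    (if β ≤ j.val ∧ j.val < α then (1:ℤ) else 0)

lemma en (hn : 1 ≤ n) : ((n:ZMod n) - 1) = (-1:ZMod n) := by
  rw [ZMod.natCast_self]; ring

lemma eq_cast_iff_val [NeZero n] (i : ZMod n) (m : ℕ) (hm : m < n) :
    i = (m : ZMod n) ↔ i.val = m := by
  constructor
  · rintro rfl; exact ZMod.val_cast_of_lt hm
  · intro h; rw [← h, cast_val_eq]

lemma valsub1 [NeZero n] (hn : 1 ≤ n) (i : ZMod n) :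
    (i - 1).val = if i.val = 0 then n - 1 else i.val - 1 := by
  split_ifs with h
  · have : i = ((0:ℕ) : ZMod n) := by rw [eq_cast_iff_val i 0 (by omega)]; exact h
    rw [this]; push_cast
    rw [show (0 : ZMod n) - 1 = -1 by ring, val_neg_one hn]
  · have h1 : i = ((i.val : ℕ) : ZMod n) := (cast_val_eq i).symm
    have h2 : i - 1 = ((i.val - 1 : ℕ) : ZMod n) := by
      rw [Nat.cast_sub (by omega)]; push_cast; rw [← h1]
    rw [h2, ZMod.val_cast_of_lt (by have := ZMod.val_lt i; omega)]

lemma ite_swap (u w : ZMod n) : (if u = w then (1:ℤ) else 0) = (if w = u then (1:ℤ) else 0) := by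
  split_ifs with h1 h2 <;> first | rfl | (exact absurd h1.symm h2) | (exact absurd ‹w = u›.symm h1)

lemma colind [NeZero n] (hn2 : 2 ≤ n) {q p : ℕ} (hqp : q < p) (hpn : p < n) (i : ZMod n) :
    (if p ≤ i.val ∨ i.val < q then (1:ℤ) else 0)
      - (if p ≤ (i-1).val ∨ (i-1).val < q then (1:ℤ) else 0)
    = (if i = ((p:ℕ) : ZMod n) then (1:ℤ) else 0) - (if i = ((q:ℕ) : ZMod n) then 1 else 0) := by
  simp only [eq_cast_iff_val i p hpn, eq_cast_iff_val i q (by omega : q < n), valsub1 (show 1 ≤ n by omega)]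
  have hv := ZMod.val_lt i
  split_ifs <;> omega

lemma rowind [NeZero n] (hn2 : 2 ≤ n) {β α : ℕ} (hβα : β < α) (hαn : α < n) (j : ZMod n) :
    (if β ≤ j.val ∧ j.val < α then (1:ℤ) else 0)
      - (if β ≤ (j-1).val ∧ (j-1).val < α then (1:ℤ) else 0)
    = (if j = ((β:ℕ) : ZMod n) then (1:ℤ) else 0) - (if j = ((α:ℕ) : ZMod n) then 1 else 0) := by
  simp only [eq_cast_iff_val j β (by omega : β < n), eq_cast_iff_val j α hαn, valsub1 (show 1 ≤ n by omega)]
  have hv := ZMod.val_lt j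
  split_ifs <;> omega

end GridAux
namespace GridAux

variable {n : ℕ}

lemma NW_witness [NeZero n] (hn2 : 2 ≤ n) (y : Equiv.Perm (ZMod n))
    (a : {j : ZMod n // j ≠ (n : ZMod n) - 1} → ℕ) (D : ZMod n → ZMod n → ℤ)
    (hAeq : ∀ j, colA n D j = (a j : ℤ)) {q p : ℕ} (hnw : NW n y D q p) :
    AWitness n a y (y * Equiv.swap ((p:ℕ) : ZMod n) ((q:ℕ) : ZMod n))
      (stdR n q p (phiv n y q) (phiv n y p))
    ∧ tauR n (stdR n q p (phiv n y q) (phiv n y p)) = (n - p) + q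
    ∧ omegaR n (stdR n q p (phiv n y q) (phiv n y p)) = (n - 1 - p) + q
    ∧ (∀ i j : ZMod n, stdR n q p (phiv n y q) (phiv n y p) i j ≠ 0 →
        ((p ≤ i.val ∨ i.val < q) ∧ phiv n y q ≤ j.val ∧ j.val < phiv n y p)
          ∧ stdR n q p (phiv n y q) (phiv n y p) i j = 1) := by
  obtain ⟨hqp, hpn, hβα, hmh, hemp⟩ := hnw
  set β := phiv n y q with hβ
  set α := phiv n y p with hα
  set i₁ : ZMod n := ((p:ℕ) : ZMod n) with hi₁
  set i₂ : ZMod n := ((q:ℕ) : ZMod n) with hi₂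
  set z : Equiv.Perm (ZMod n) := y * Equiv.swap i₁ i₂ with hz
  set R : ZMod n → ZMod n → ℤ := stdR n q p β α with hR
  have hαn : α < n := ZMod.val_lt _
  have hne12 : i₁ ≠ i₂ := by
    rw [hi₁, hi₂, Ne, cast_inj_lt hpn (by omega)]; omega
  have hz1 : z i₁ = y i₂ := by
    rw [hz]; simp [Equiv.Perm.mul_apply, Equiv.swap_apply_left]
  have hz2 : z i₂ = y i₁ := by
    rw [hz]; simp [Equiv.Perm.mul_apply, Equiv.swap_apply_right]
  have hzo : ∀ i : ZMod n, i ≠ i₁ → i ≠ i₂ → z i = y i := by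
    intro i h1 h2
    rw [hz]; simp [Equiv.Perm.mul_apply, Equiv.swap_apply_of_ne_of_ne h1 h2]
  have hyi2 : y i₂ = ((β:ℕ) : ZMod n) := (cast_val_eq _).symm
  have hyi1 : y i₁ = ((α:ℕ) : ZMod n) := (cast_val_eq _).symm
  have hrow : ∀ j : ZMod n, cycInt n (z i₁) (z i₂) j ↔ (β ≤ j.val ∧ j.val < α) := by
    intro j; rw [hz1, hz2, hyi1, hyi2]; exact cyc1 hβα hαn j
  have hcol : ∀ i : ZMod n, cycInt n i₁ i₂ i ↔ (p ≤ i.val ∨ i.val < q) :=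
    fun i => cyc2 hqp hpn i
  have hyz : y = z * Equiv.swap i₁ i₂ := by
    rw [hz, mul_assoc, Equiv.swap_mul_self, mul_one]
  -- corner
  have hcorner : R (-1) (-1) = 0 := by
    rw [hR]; unfold stdR
    rw [if_neg (by rw [val_neg_one (by omega)]; omega : ¬(β ≤ (-1:ZMod n).val ∧ (-1:ZMod n).val < α))]
    ring
  -- positivity
  have hpos : ∀ i j : ZMod n, 0 ≤ R i j := by
    intro i j; rw [hR]; unfold stdR; split_ifs <;> norm_num
  -- shape
  have hshape : ∀ i j : ZMod n,
      (cycInt n i₁ i₂ i ∧ cycInt n (z i₁) (z i₂) j → R i j = 1) ∧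
      (¬(cycInt n i₁ i₂ i ∧ cycInt n (z i₁) (z i₂) j) → R i j = 0) := by
    intro i j
    rw [hcol, hrow, hR]; unfold stdR
    constructor
    · rintro ⟨h1, h2⟩; rw [if_pos h1, if_pos h2]; ring
    · intro h
      rcases not_and_or.mp h with h | h
      · rw [if_neg h]; ring
      · rw [if_neg h]; ring
  -- the domain equation
  have heq : ∀ i j : ZMod n,
      R i j - R (i-1) j - R i (j-1) + R (i-1) (j-1) =
        (if z i = j then 1 else 0) - (if y i = j then 1 else 0) := by
    intro i j
    have key : R i j - R (i-1) j - R i (j-1) + R (i-1) (j-1) =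
        ((if i = i₁ then (1:ℤ) else 0) - (if i = i₂ then 1 else 0)) *
        ((if j = ((β:ℕ):ZMod n) then (1:ℤ) else 0) - (if j = ((α:ℕ):ZMod n) then 1 else 0)) := by
      rw [← colind hn2 hqp hpn i, ← rowind hn2 hβα hαn j, hR]
      unfold stdR; ring
    rw [key]
    have hβαne : ((β:ℕ):ZMod n) ≠ ((α:ℕ):ZMod n) := by
      rw [Ne, cast_inj_lt (by omega) hαn]; omega
    by_cases h1 : i = i₁
    · subst h1
      rw [if_pos rfl, if_neg hne12, hz1, hyi2, hyi1]
      rw [ite_swap ((β:ℕ):ZMod n) j, ite_swap ((α:ℕ):ZMod n) j]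
      ring
    · by_cases h2 : i = i₂
      · subst h2
        rw [if_neg h1, if_pos rfl, hz2, hyi1, hyi2]
        rw [ite_swap ((α:ℕ):ZMod n) j, ite_swap ((β:ℕ):ZMod n) j]
        ring
      · rw [if_neg h1, if_neg h2, hzo i h1 h2]
        ring
  -- emptiness
  have hempt : ∀ i : ZMod n, i ≠ i₁ → i ≠ i₂ → cycInt n i₁ i₂ i →
      ¬ cycInt n (z i₁) (z i₂) (z i) := by
    intro i h1 h2 hmem
    rw [hrow]
    have hzi : z i = y i := hzo i h1 h2
    have hvi : (y i).val = phiv n y i.val := by rw [phiv, cast_val_eq]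
    rw [hzi, hvi]
    refine hemp i.val (ZMod.val_lt i) ?_
    have hm := (hcol i).mp hmem
    have hv1 : i.val ≠ p := by
      intro h; exact h1 (by rw [eq_cast_iff_val i p hpn]; exact h)
    have hv2 : i.val ≠ q := by
      intro h; exact h2 (by rw [eq_cast_iff_val i q (by omega)]; exact h)
    omega
  have hen : ((n : ZMod n) - 1) = (-1 : ZMod n) := en (by omega)
  -- rectangle
  have hrect : IsGridRect n z y R := by
    refine ⟨⟨⟨?_, heq⟩, hpos⟩, i₁, i₂, hne12, hyz, hshape, hempt⟩
    rw [hen]; exact hcorner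
  -- colA ≠ 0
  have hβcast : ((β:ℕ) : ZMod n) ≠ (n : ZMod n) - 1 := by
    rw [hen, ← neg_one_cast (n := n) (by omega), Ne, cast_inj_lt (by omega) (by omega)]
    omega
  have hcolA1 : colA n R ⟨((β:ℕ):ZMod n), hβcast⟩ = 1 := by
    show R ((n : ZMod n) - 1) ((β:ℕ):ZMod n) = 1
    rw [hen, hR]; unfold stdR
    rw [if_pos (by rw [val_neg_one (by omega)]; omega : p ≤ (-1:ZMod n).val ∨ (-1:ZMod n).val < q)]
    rw [if_pos (by rw [ZMod.val_cast_of_lt (by omega : β < n)]; omega)]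
    ring
  have hcolAne : colA n R ≠ 0 := by
    intro h
    have := congrFun h ⟨((β:ℕ):ZMod n), hβcast⟩
    rw [hcolA1] at this
    norm_num at this
  -- colA ≤ a
  have hcolAle : ∀ j, colA n R j ≤ (a j : ℤ) := by
    intro j
    have h2 : (a j : ℤ) = D (-1) j.1 := by
      rw [← hAeq j]; exact congrFun (congrArg D hen) j.1
    show R ((n : ZMod n) - 1) j.1 ≤ (a j : ℤ)
    rw [show R ((n : ZMod n) - 1) j.1 = R (-1) j.1 from congrFun (congrArg R hen) j.1]
    rw [h2, hR]; unfold stdR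
    by_cases hrowc : β ≤ j.1.val ∧ j.1.val < α
    · have h1 : 1 ≤ D (-1) ((j.1.val : ℕ) : ZMod n) := hmh j.1.val hrowc.1 hrowc.2
      rw [cast_val_eq] at h1
      split_ifs <;> omega
    · rw [if_neg hrowc]
      have h3 : (0:ℤ) ≤ D (-1) j.1 := by rw [← h2]; exact Int.ofNat_nonneg _
      split_ifs <;> omega
  -- support characterization
  have hsupp : ∀ i : ZMod n, (∃ j, R i j ≠ 0) ↔ (p ≤ i.val ∨ i.val < q) := by
    intro i
    constructor
    · rintro ⟨j, hj⟩
      by_contra hc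
      apply hj
      rw [hR]; unfold stdR; rw [if_neg hc]; ring
    · intro h
      refine ⟨((β:ℕ):ZMod n), ?_⟩
      rw [hR]; unfold stdR
      rw [if_pos h, if_pos (by rw [ZMod.val_cast_of_lt (by omega : β < n)]; omega)]
      norm_num
  have htau : tauR n R = (n - p) + q := by
    unfold tauR
    have hseteq : {i : ZMod n | ∃ j, R i j ≠ 0} =
        ↑(Finset.univ.filter (fun i : ZMod n => p ≤ i.val ∨ i.val < q)) := by
      ext i
      simp only [Set.mem_setOf_eq, Finset.coe_filter, Finset.mem_univ, true_and,
        Set.mem_setOf_eq]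
      exact hsupp i
    rw [hseteq, Set.ncard_coe_finset, card_tau hqp hpn]
  have homega : omegaR n R = (n - 1 - p) + q := by
    unfold omegaR
    have hseteq : {i : ZMod n | i ≠ (n : ZMod n) - 1 ∧ ∃ j, R i j ≠ 0} =
        ↑(Finset.univ.filter (fun i : ZMod n => (p ≤ i.val ∨ i.val < q) ∧ i.val ≠ n - 1)) := by
      ext i
      simp only [Set.mem_setOf_eq, Finset.coe_filter, Finset.mem_univ, true_and,
        Set.mem_setOf_eq]
      constructor
      · rintro ⟨h1, h2⟩
        refine ⟨(hsupp i).mp h2, ?_⟩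
        intro hv
        exact h1 (by rw [hen, ← neg_one_cast (n := n) (by omega),
          eq_cast_iff_val i (n-1) (by omega)]; exact hv)
      · rintro ⟨h1, h2⟩
        refine ⟨?_, (hsupp i).mpr h1⟩
        intro hv
        apply h2
        rw [hen, ← neg_one_cast (n := n) (by omega)] at hv
        rw [(eq_cast_iff_val i (n-1) (by omega)).mp hv]
    rw [hseteq, Set.ncard_coe_finset, card_omega hqp hpn]
  refine ⟨⟨hrect, hcolAne, hcolAle⟩, htau, homega, ?_⟩
  intro i j hij
  have h1 : (p ≤ i.val ∨ i.val < q) ∧ β ≤ j.val ∧ j.val < α := by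
    by_contra hc
    apply hij
    rw [hR]; unfold stdR
    rcases not_and_or.mp hc with h | h
    · rw [if_neg h]; ring
    · rw [if_neg h]; ring
  refine ⟨h1, ?_⟩
  rw [hR]; unfold stdR
  rw [if_pos h1.1, if_pos h1.2]; ring

end GridAux
namespace GridAux

variable {n : ℕ}

lemma witness_NW [NeZero n] (hn2 : 2 ≤ n) (y z : Equiv.Perm (ZMod n))
    (a : {j : ZMod n // j ≠ (n : ZMod n) - 1} → ℕ) (D : ZMod n → ZMod n → ℤ)
    (hAeq : ∀ j, colA n D j = (a j : ℤ)) (R : ZMod n → ZMod n → ℤ)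
    (hW : AWitness n a y z R) :
    ∃ q p : ℕ, NW n y D q p ∧ tauR n R = (n - p) + q ∧ omegaR n R = (n - 1 - p) + q := by
  obtain ⟨⟨⟨⟨hcorner, _⟩, hposR⟩, i₁, i₂, hne, hyz, hshape, hempty⟩, hA0, hAle⟩ := hW
  have hen : ((n : ZMod n) - 1) = (-1 : ZMod n) := en (by omega)
  set p := i₁.val with hp
  set q := i₂.val with hq
  set j₁ := z i₁ with hj₁
  set j₂ := z i₂ with hj₂
  set β := j₁.val with hβ
  set α := j₂.val with hα
  have hpn : p < n := ZMod.val_lt i₁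
  have hqn : q < n := ZMod.val_lt i₂
  have hβn : β < n := ZMod.val_lt j₁
  have hαn : α < n := ZMod.val_lt j₂
  have hi₁ : i₁ = ((p:ℕ) : ZMod n) := (cast_val_eq i₁).symm
  have hi₂ : i₂ = ((q:ℕ) : ZMod n) := (cast_val_eq i₂).symm
  have hj₁c : j₁ = ((β:ℕ) : ZMod n) := (cast_val_eq j₁).symm
  have hj₂c : j₂ = ((α:ℕ) : ZMod n) := (cast_val_eq j₂).symm
  -- the -1 column is in the rectangle
  obtain ⟨j0, hj0⟩ := Function.ne_iff.mp hA0
  have hj0' : R (-1) j0.1 ≠ 0 := by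
    rw [← congrFun (congrArg R hen) j0.1]; exact hj0
  have hmem : cycInt n i₁ i₂ (-1) ∧ cycInt n j₁ j₂ j0.1 := by
    by_contra hc
    exact hj0' ((hshape (-1) j0.1).2 hc)
  -- -1 is not in the row interval
  have hnm : ¬ cycInt n j₁ j₂ (-1) := by
    intro hc
    have h0 : R (-1) (-1) = 1 := (hshape (-1) (-1)).1 ⟨hmem.1, hc⟩
    have h1 : R (-1) (-1) = 0 := by
      rw [← hen]; exact hcorner
    rw [h0] at h1; norm_num at h1
  -- q < p
  have hdd0 : (i₂ - i₁).val ≠ 0 := by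
    rw [Ne, ZMod.val_eq_zero, sub_eq_zero]
    exact fun h => hne h.symm
  have hddn : (i₂ - i₁).val < n := ZMod.val_lt _
  have hi₂d : i₂ = i₁ + (((i₂ - i₁).val : ℕ) : ZMod n) := by
    rw [cast_val_eq]; ring
  set dd := (i₂ - i₁).val with hdd
  have hqval : q = (if p + dd < n then p + dd else p + dd - n) := by
    rw [hq, hi₂d, hi₁, show ((p:ℕ):ZMod n) + ((dd:ℕ):ZMod n) = ((p+dd:ℕ):ZMod n) by push_cast; ring]
    exact castval (p+dd) (by omega)
  have hqp : q < p := by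
    obtain ⟨k, hk, hk2⟩ := hmem.1
    rw [← hdd] at hk
    have hkval : (n:ℕ) - 1 = (if p + k < n then p + k else p + k - n) := by
      rw [← val_neg_one (n := n) (by omega), hk2, hi₁,
        show ((p:ℕ):ZMod n) + ((k:ℕ):ZMod n) = ((p+k:ℕ):ZMod n) by push_cast; ring]
      exact castval (p+k) (by omega)
    split_ifs at hkval with h1
    · split_ifs at hqval with h2 <;> omega
    · omega
  -- β < α
  have hee0 : (j₂ - j₁).val ≠ 0 := by
    rw [Ne, ZMod.val_eq_zero, sub_eq_zero]
    intro h
    exact hne (z.injective (by rw [← hj₁, ← hj₂, h]))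
  have heen : (j₂ - j₁).val < n := ZMod.val_lt _
  have hj₂d : j₂ = j₁ + (((j₂ - j₁).val : ℕ) : ZMod n) := by
    rw [cast_val_eq]; ring
  set ee := (j₂ - j₁).val with hee
  have hαval : α = (if β + ee < n then β + ee else β + ee - n) := by
    rw [hα, hj₂d, hj₁c, show ((β:ℕ):ZMod n) + ((ee:ℕ):ZMod n) = ((β+ee:ℕ):ZMod n) by push_cast; ring]
    exact castval (β+ee) (by omega)
  have hβα : β < α := by
    split_ifs at hαval with h1
    · omega
    · exfalso
      apply hnm
      refine ⟨n - 1 - β, by rw [← hee]; omega, ?_⟩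
      rw [hj₁c, show ((β:ℕ):ZMod n) + ((n-1-β:ℕ):ZMod n) = ((β+(n-1-β):ℕ):ZMod n) by push_cast; ring,
        show β+(n-1-β) = n-1 by omega, neg_one_cast (by omega)]
  -- phiv relations
  have hyi₂ : y i₂ = j₁ := by
    rw [hyz]; simp [Equiv.Perm.mul_apply, Equiv.swap_apply_right]; rfl
  have hyi₁ : y i₁ = j₂ := by
    rw [hyz]; simp [Equiv.Perm.mul_apply, Equiv.swap_apply_left]; rfl
  have hphq : phiv n y q = β := by rw [phiv, ← hi₂, hyi₂]
  have hphp : phiv n y p = α := by rw [phiv, ← hi₁, hyi₁]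
  -- row interval membership translation
  have hrowiff : ∀ w : ZMod n, cycInt n j₁ j₂ w ↔ (β ≤ w.val ∧ w.val < α) := by
    intro w; rw [hj₁c, hj₂c]; exact cyc1 hβα hαn w
  have hcoliff : ∀ w : ZMod n, cycInt n i₁ i₂ w ↔ (p ≤ w.val ∨ w.val < q) := by
    intro w; rw [hi₁, hi₂]; exact cyc2 hqp hpn w
  refine ⟨q, p, ⟨hqp, hpn, by rw [hphq, hphp]; exact hβα, ?_, ?_⟩, ?_, ?_⟩
  · -- row multiplicities
    intro s hs1 hs2
    rw [hphq] at hs1; rw [hphp] at hs2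
    have hsne : ((s:ℕ) : ZMod n) ≠ (n : ZMod n) - 1 := by
      rw [hen, ← neg_one_cast (n := n) (by omega), Ne, cast_inj_lt (by omega) (by omega)]
      omega
    have hR1 : R (-1) ((s:ℕ) : ZMod n) = 1 := by
      refine (hshape _ _).1 ⟨hmem.1, ?_⟩
      rw [hrowiff, ZMod.val_cast_of_lt (by omega)]
      exact ⟨hs1, hs2⟩
    have hle := hAle ⟨((s:ℕ) : ZMod n), hsne⟩
    have hcA : colA n R ⟨((s:ℕ) : ZMod n), hsne⟩ = 1 := by
      show R ((n : ZMod n) - 1) ((s:ℕ) : ZMod n) = 1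
      rw [congrFun (congrArg R hen) _]; exact hR1
    rw [hcA] at hle
    have hDa : colA n D ⟨((s:ℕ) : ZMod n), hsne⟩ = D (-1) ((s:ℕ) : ZMod n) := by
      show D ((n : ZMod n) - 1) ((s:ℕ) : ZMod n) = _
      rw [congrFun (congrArg D hen) _]
    have := hAeq ⟨((s:ℕ) : ZMod n), hsne⟩
    rw [hDa] at this
    omega
  · -- emptiness
    intro t htn hor hcon
    rw [hphq, hphp] at hcon
    have hit : ((t:ℕ) : ZMod n).val = t := ZMod.val_cast_of_lt htn
    have hti₁ : ((t:ℕ) : ZMod n) ≠ i₁ := by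
      rw [hi₁, Ne, cast_inj_lt htn hpn]; omega
    have hti₂ : ((t:ℕ) : ZMod n) ≠ i₂ := by
      rw [hi₂, Ne, cast_inj_lt htn hqn]; omega
    have htmem : cycInt n i₁ i₂ ((t:ℕ) : ZMod n) := by
      rw [hcoliff, hit]; omega
    apply hempty _ hti₁ hti₂ htmem
    have hzt : z ((t:ℕ) : ZMod n) = y ((t:ℕ) : ZMod n) := by
      rw [hyz]; simp [Equiv.Perm.mul_apply, Equiv.swap_apply_of_ne_of_ne hti₁ hti₂]
    rw [hzt, hrowiff]
    exact hcon
  · -- tau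
    have hsupp : ∀ i : ZMod n, (∃ j, R i j ≠ 0) ↔ (p ≤ i.val ∨ i.val < q) := by
      intro i
      constructor
      · rintro ⟨j, hj⟩
        by_contra hc
        apply hj
        refine (hshape i j).2 ?_
        rw [not_and_or, hcoliff]
        exact Or.inl hc
      · intro h
        refine ⟨j₁, ?_⟩
        have : R i j₁ = 1 := by
          refine (hshape i j₁).1 ⟨(hcoliff i).mpr h, (hrowiff j₁).mpr ⟨le_refl _, hβα⟩⟩
        rw [this]; norm_num
    unfold tauR
    have hseteq : {i : ZMod n | ∃ j, R i j ≠ 0} =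
        ↑(Finset.univ.filter (fun i : ZMod n => p ≤ i.val ∨ i.val < q)) := by
      ext i
      simp only [Set.mem_setOf_eq, Finset.coe_filter, Finset.mem_univ, true_and, Set.mem_setOf_eq]
      exact hsupp i
    rw [hseteq, Set.ncard_coe_finset, card_tau hqp hpn]
  · -- omega
    have hsupp : ∀ i : ZMod n, (∃ j, R i j ≠ 0) ↔ (p ≤ i.val ∨ i.val < q) := by
      intro i
      constructor
      · rintro ⟨j, hj⟩
        by_contra hc
        apply hj
        refine (hshape i j).2 ?_
        rw [not_and_or, hcoliff]
        exact Or.inl hc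
      · intro h
        refine ⟨j₁, ?_⟩
        have : R i j₁ = 1 := by
          refine (hshape i j₁).1 ⟨(hcoliff i).mpr h, (hrowiff j₁).mpr ⟨le_refl _, hβα⟩⟩
        rw [this]; norm_num
    unfold omegaR
    have hseteq : {i : ZMod n | i ≠ (n : ZMod n) - 1 ∧ ∃ j, R i j ≠ 0} =
        ↑(Finset.univ.filter (fun i : ZMod n => (p ≤ i.val ∨ i.val < q) ∧ i.val ≠ n - 1)) := by
      ext i
      simp only [Set.mem_setOf_eq, Finset.coe_filter, Finset.mem_univ, true_and, Set.mem_setOf_eq]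
      constructor
      · rintro ⟨h1, h2⟩
        refine ⟨(hsupp i).mp h2, fun hv => h1 ?_⟩
        rw [hen, ← neg_one_cast (n := n) (by omega), eq_cast_iff_val i (n-1) (by omega)]
        exact hv
      · rintro ⟨h1, h2⟩
        refine ⟨fun hv => h2 ?_, (hsupp i).mpr h1⟩
        rw [hen, ← neg_one_cast (n := n) (by omega)] at hv
        exact (eq_cast_iff_val i (n-1) (by omega)).mp hv
    rw [hseteq, Set.ncard_coe_finset, card_omega hqp hpn]

end GridAux
namespace GridAux

variable {n : ℕ}

lemma injphiv [NeZero n] (y : Equiv.Perm (ZMod n)) {t t' : ℕ} (ht : t < n) (ht' : t' < n)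
    (h : phiv n y t = phiv n y t') : t = t' := by
  unfold phiv at h
  have h2 : y ((t:ℕ) : ZMod n) = y ((t':ℕ) : ZMod n) := ZMod.val_injective n h
  have h3 := y.injective h2
  exact (cast_inj_lt ht ht').mp h3

lemma max_NW_pos [NeZero n] (hn2 : 2 ≤ n) (x y : Equiv.Perm (ZMod n)) (D : ZMod n → ZMod n → ℤ)
    (hDeq : ∀ i j : ZMod n, D i j - D (i-1) j - D i (j-1) + D (i-1) (j-1) =
      (if x i = j then 1 else 0) - (if y i = j then 1 else 0))
    (hDpos : ∀ i j, 0 ≤ D i j) (hcorner : D (-1) (-1) = 0)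
    {q p : ℕ} (hnw : NW n y D q p)
    (hmax : ∀ q' p', NW n y D q' p' → p' - q' ≤ p - q) :
    ∀ t₀ s₀ : ℕ, t₀ < n → (p ≤ t₀ ∨ t₀ < q) → phiv n y q ≤ s₀ → s₀ < phiv n y p →
      1 ≤ D ((t₀:ℕ) : ZMod n) ((s₀:ℕ) : ZMod n) := by
  classical
  obtain ⟨hqp, hpn, hβα, hmh, hemp⟩ := hnw
  set β := phiv n y q with hβ
  set α := phiv n y p with hα
  have hαn : α < n := ZMod.val_lt _
  intro t₀ s₀ ht₀n hor hs1 hs2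
  by_contra hcon
  have h0 : D ((t₀:ℕ) : ZMod n) ((s₀:ℕ) : ZMod n) = 0 := by
    have := hDpos ((t₀:ℕ) : ZMod n) ((s₀:ℕ) : ZMod n); omega
  -- t₀ ≠ n-1
  have ht₀ne : t₀ ≠ n - 1 := by
    intro h
    have : ((t₀:ℕ) : ZMod n) = (-1 : ZMod n) := by rw [h]; exact neg_one_cast (by omega)
    rw [this] at h0
    have := hmh s₀ hs1 hs2
    omega
  rcases hor with hA | hB
  · -- CASE A : p ≤ t₀ < n-1
    have ht₀lt : t₀ < n - 1 := by omega
    set P : ℕ → Prop := fun r => ∀ s, s₀ ≤ s → s < r → 1 ≤ D (-1) ((s:ℕ) : ZMod n) with hP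
    have hPs₀ : P (s₀ + 1) := by
      intro s h1 h2
      rw [show s = s₀ by omega]
      exact hmh s₀ hs1 hs2
    have hsb : s₀ + 1 ≤ n - 1 := by omega
    set Γ := Nat.findGreatest P (n-1) with hΓ
    have hΓ1 : s₀ < Γ := lt_of_lt_of_le (by omega) (Nat.le_findGreatest hsb hPs₀)
    have hΓP : P Γ := Nat.findGreatest_spec hsb hPs₀
    have hΓn : Γ ≤ n - 1 := Nat.findGreatest_le _
    have hmΓ : D (-1) ((Γ:ℕ) : ZMod n) = 0 := by
      by_cases hΓe : Γ = n - 1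
      · rw [hΓe, neg_one_cast (by omega)]; exact hcorner
      · have hnP : ¬ P (Γ + 1) := by
          intro hP1
          have := Nat.le_findGreatest (show Γ+1 ≤ n-1 by omega) hP1
          omega
        simp only [hP] at hnP
        push_neg at hnP
        obtain ⟨s, ha1, ha2, ha3⟩ := hnP
        have hsΓ : s = Γ := by
          by_contra hne
          exact absurd (hΓP s ha1 (by omega)) (by omega)
        have := hDpos (-1) ((Γ:ℕ) : ZMod n)
        rw [hsΓ] at ha3
        omega
    by_cases hEx : ∃ t, t₀ < t ∧ t ≤ n - 1 ∧ s₀ < phiv n y t ∧ phiv n y t ≤ Γ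
    · -- build a longer witness
      obtain ⟨ts, hts1, hts2, hts3, hts4⟩ := hEx
      have htsp : p < ts := by omega
      have hnin := hemp ts (by omega) (Or.inr htsp)
      have hαφ : α < phiv n y ts := by
        have h1 : ¬(β ≤ phiv n y ts ∧ phiv n y ts < α) := hnin
        have h2 : phiv n y ts ≠ α := by
          intro h
          exact absurd (injphiv y (by omega) hpn h) (by omega)
        omega
      set S : ℕ → Prop := fun t => t ≤ n - 1 ∧ α < phiv n y t ∧
        (∀ s, α ≤ s → s < phiv n y t → 1 ≤ D (-1) ((s:ℕ) : ZMod n)) with hS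
      have hSts : S ts := by
        refine ⟨hts2, hαφ, fun s h1 h2 => hΓP s (by omega) (by omega)⟩
      set tp := Nat.findGreatest S (n-1) with htp
      have hStp : S tp := Nat.findGreatest_spec hts2 hSts
      have htsle : ts ≤ tp := Nat.le_findGreatest hts2 hSts
      have htpp : p < tp := by omega
      have htpn : tp ≤ n - 1 := Nat.findGreatest_le _
      have claim1 : ∀ t₃, tp < t₃ → t₃ < n → ¬(α ≤ phiv n y t₃ ∧ phiv n y t₃ < phiv n y tp) := by
        rintro t₃ h1 h2 ⟨h3, h4⟩
        have hne3 : phiv n y t₃ ≠ α := by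
          intro h
          exact absurd (injphiv y (by omega) hpn h) (by omega)
        have hS3 : S t₃ := ⟨by omega, by omega, fun s hx1 hx2 => hStp.2.2 s hx1 (by omega)⟩
        have := Nat.le_findGreatest (show t₃ ≤ n-1 by omega) hS3
        omega
      by_cases hL : ∃ t₃, t₃ < q ∧ α ≤ phiv n y t₃ ∧ phiv n y t₃ < phiv n y tp
      · -- two-sided extension
        obtain ⟨tc, htc1, htc2, htc3⟩ := hL
        set V : ℕ → Prop := fun v => ∃ t₃, t₃ < q ∧ phiv n y t₃ = v ∧ α ≤ v with hV
        have hVtc : V (phiv n y tc) := ⟨tc, htc1, rfl, htc2⟩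
        set vp := Nat.findGreatest V (phiv n y tp - 1) with hvp
        have hVvp : V vp := Nat.findGreatest_spec (by omega) hVtc
        have hvplb : phiv n y tc ≤ vp := Nat.le_findGreatest (by omega) hVtc
        have hvpub : vp ≤ phiv n y tp - 1 := Nat.findGreatest_le _
        obtain ⟨tsec, hts1', hts2', hts3'⟩ := hVvp
        have hnw2 : NW n y D tsec tp := by
          refine ⟨by omega, by omega, ?_, ?_, ?_⟩
          · rw [hts2']
            have : 0 < phiv n y tp := by omega
            omega
          · intro s h1 h2
            rw [hts2'] at h1
            exact hStp.2.2 s (by omega) h2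
          · intro t₃ h1 h2 ⟨h3, h4⟩
            rw [hts2'] at h3
            rcases h2 with h2 | h2
            · -- t₃ < tsec
              have hV3 : V (phiv n y t₃) := ⟨t₃, by omega, rfl, by omega⟩
              have := Nat.le_findGreatest (show phiv n y t₃ ≤ phiv n y tp - 1 by omega) hV3
              have heq3 : phiv n y t₃ = vp := by omega
              rw [← hts2'] at heq3
              exact absurd (injphiv y (by omega) (by omega) heq3) (by omega)
            · exact claim1 t₃ h2 h1 ⟨by omega, h4⟩
        have := hmax tsec tp hnw2
        omega
      · -- one-sided extension (q, tp)
        have hnw2 : NW n y D q tp := by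
          refine ⟨by omega, by omega, by omega, ?_, ?_⟩
          · intro s h1 h2
            by_cases hsα : s < α
            · exact hmh s h1 hsα
            · exact hStp.2.2 s (by omega) h2
          · intro t₃ h1 h2 ⟨h3, h4⟩
            by_cases hφα : phiv n y t₃ < α
            · rcases h2 with h2 | h2
              · exact hemp t₃ h1 (Or.inl h2) ⟨h3, hφα⟩
              · exact hemp t₃ h1 (Or.inr (by omega)) ⟨h3, hφα⟩
            · rcases h2 with h2 | h2
              · exact hL ⟨t₃, h2, by omega, h4⟩
              · exact claim1 t₃ h2 h1 ⟨by omega, h4⟩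
        have := hmax q tp hnw2
        omega
    · -- box contradiction
      push_neg at hEx
      have hy' : ∀ u ≤ n - 1 - (t₀+1), ∀ v ≤ Γ - (s₀+1),
          y (((t₀+1:ℕ) : ZMod n) + ((u:ℕ) : ZMod n)) ≠ ((s₀+1:ℕ) : ZMod n) + ((v:ℕ) : ZMod n) := by
        intro u hu v hv heq
        have hc1 : ((t₀+1:ℕ) : ZMod n) + ((u:ℕ) : ZMod n) = ((t₀+1+u:ℕ) : ZMod n) := by
          push_cast; ring
        have hc2 : ((s₀+1:ℕ) : ZMod n) + ((v:ℕ) : ZMod n) = ((s₀+1+v:ℕ) : ZMod n) := by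
          push_cast; ring
        rw [hc1, hc2] at heq
        have hφ : phiv n y (t₀+1+u) = s₀+1+v := by
          rw [phiv, heq, ZMod.val_cast_of_lt (by omega)]
        have h8 := hEx (t₀+1+u) (by omega) (by omega) (by omega)
        omega
      have hbox := box hDeq ((t₀+1:ℕ) : ZMod n) ((s₀+1:ℕ) : ZMod n)
        (n - 1 - (t₀+1)) (Γ - (s₀+1)) hy'
      have hc1 : ((t₀+1:ℕ) : ZMod n) + ((n-1-(t₀+1):ℕ) : ZMod n) = (-1 : ZMod n) := by
        rw [show ((t₀+1:ℕ) : ZMod n) + ((n-1-(t₀+1):ℕ) : ZMod n) = ((t₀+1+(n-1-(t₀+1)):ℕ) : ZMod n) by push_cast; ring,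
          show t₀+1+(n-1-(t₀+1)) = n-1 by omega]
        exact neg_one_cast (by omega)
      have hc2 : ((s₀+1:ℕ) : ZMod n) + ((Γ-(s₀+1):ℕ) : ZMod n) = ((Γ:ℕ) : ZMod n) := by
        rw [show ((s₀+1:ℕ) : ZMod n) + ((Γ-(s₀+1):ℕ) : ZMod n) = ((s₀+1+(Γ-(s₀+1)):ℕ) : ZMod n) by push_cast; ring,
          show s₀+1+(Γ-(s₀+1)) = Γ by omega]
      have hc3 : ((t₀+1:ℕ) : ZMod n) - 1 = ((t₀:ℕ) : ZMod n) := by push_cast; ring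
      have hc4 : ((s₀+1:ℕ) : ZMod n) - 1 = ((s₀:ℕ) : ZMod n) := by push_cast; ring
      rw [hc1, hc2, hc3, hc4] at hbox
      have h5 := hDpos ((t₀:ℕ) : ZMod n) ((Γ:ℕ) : ZMod n)
      have h6 := hmh s₀ hs1 hs2
      omega
  · -- CASE B : t₀ < q
    set P' : ℕ → Prop := fun d => ∀ s, d ≤ s → s ≤ s₀ → 1 ≤ D (-1) ((s:ℕ) : ZMod n) with hP'
    have hP's₀ : P' s₀ := by
      intro s h1 h2
      rw [show s = s₀ by omega]
      exact hmh s₀ hs1 hs2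
    have hex' : ∃ d, P' d := ⟨s₀, hP's₀⟩
    set Δ := Nat.find hex' with hΔ
    have hΔP : P' Δ := Nat.find_spec hex'
    have hΔle : Δ ≤ s₀ := Nat.find_le hP's₀
    have hmδ : D (-1) (((Δ:ℕ) : ZMod n) - 1) = 0 := by
      by_cases hΔ0 : Δ = 0
      · rw [hΔ0]
        rw [show (((0:ℕ):ZMod n)) - 1 = (-1 : ZMod n) by push_cast; ring]
        exact hcorner
      · have hnP : ¬ P' (Δ - 1) := Nat.find_min hex' (by omega)
        simp only [hP'] at hnP
        push_neg at hnP
        obtain ⟨s, ha1, ha2, ha3⟩ := hnP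
        have hsΔ : s = Δ - 1 := by
          by_contra hne
          exact absurd (hΔP s (by omega) ha2) (by omega)
        have hcast : ((Δ:ℕ) : ZMod n) - 1 = ((Δ-1:ℕ) : ZMod n) := by
          rw [Nat.cast_sub (by omega)]; push_cast; ring
        rw [hcast]
        have := hDpos (-1) ((Δ-1:ℕ) : ZMod n)
        rw [hsΔ] at ha3
        omega
    by_cases hEx : ∃ t, t ≤ t₀ ∧ Δ ≤ phiv n y t ∧ phiv n y t < β
    · -- build a longer witness
      obtain ⟨ts, hts1, hts2, hts3⟩ := hEx
      set S' : ℕ → Prop := fun t => t < q ∧ phiv n y t < β ∧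
        (∀ s, phiv n y t ≤ s → s < β → 1 ≤ D (-1) ((s:ℕ) : ZMod n)) with hS'
      have hSts : S' ts := by
        refine ⟨by omega, hts3, fun s h1 h2 => hΔP s (by omega) (by omega)⟩
      have hexS : ∃ t, S' t := ⟨ts, hSts⟩
      set tm := Nat.find hexS with htm
      have hStm : S' tm := Nat.find_spec hexS
      have htmq : tm < q := hStm.1
      have claim1' : ∀ t₃, t₃ < tm → ¬(phiv n y tm ≤ phiv n y t₃ ∧ phiv n y t₃ < β) := by
        rintro t₃ h1 ⟨h2, h3⟩
        have hS3 : S' t₃ := ⟨by omega, h3, fun s hx1 hx2 => hStm.2.2 s (by omega) hx2⟩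
        exact absurd hS3 (Nat.find_min hexS h1)
      by_cases hR : ∃ t₃, p < t₃ ∧ t₃ ≤ n - 1 ∧ phiv n y tm < phiv n y t₃ ∧ phiv n y t₃ < β
      · obtain ⟨tc, htc1, htc2, htc3, htc4⟩ := hR
        set T : ℕ → Prop := fun t => p < t ∧ phiv n y tm < phiv n y t ∧ phiv n y t < β with hT
        have hTtc : T tc := ⟨htc1, htc3, htc4⟩
        set tsec := Nat.findGreatest T (n-1) with htsec
        have hTts : T tsec := Nat.findGreatest_spec htc2 hTtc
        have htsecn : tsec ≤ n - 1 := Nat.findGreatest_le _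
        have hnw2 : NW n y D tm tsec := by
          refine ⟨by omega, by omega, hTts.2.1, ?_, ?_⟩
          · intro s h1 h2
            exact hStm.2.2 s h1 (by omega)
          · intro t₃ h1 h2 ⟨h3, h4⟩
            rcases h2 with h2 | h2
            · exact claim1' t₃ h2 ⟨h3, by omega⟩
            · -- t₃ > tsec
              have hne3 : phiv n y t₃ ≠ phiv n y tm := by
                intro h
                exact absurd (injphiv y h1 (by omega) h) (by omega)
              have hT3 : T t₃ := ⟨by omega, by omega, by omega⟩
              have := Nat.le_findGreatest (show t₃ ≤ n-1 by omega) hT3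
              omega
        have := hmax tm tsec hnw2
        omega
      · have hnw2 : NW n y D tm p := by
          refine ⟨by omega, hpn, by omega, ?_, ?_⟩
          · intro s h1 h2
            by_cases hsβ : s < β
            · exact hStm.2.2 s h1 hsβ
            · exact hmh s (by omega) h2
          · intro t₃ h1 h2 ⟨h3, h4⟩
            by_cases hφβ : phiv n y t₃ < β
            · rcases h2 with h2 | h2
              · exact claim1' t₃ h2 ⟨h3, hφβ⟩
              · -- p < t₃
                have hne3 : phiv n y t₃ ≠ phiv n y tm := by
                  intro h
                  exact absurd (injphiv y h1 (by omega) h) (by omega)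
                exact hR ⟨t₃, h2, by omega, by omega, hφβ⟩
            · rcases h2 with h2 | h2
              · exact hemp t₃ h1 (Or.inl (by omega)) ⟨by omega, h4⟩
              · exact hemp t₃ h1 (Or.inr h2) ⟨by omega, h4⟩
        have := hmax tm p hnw2
        omega
    · -- box contradiction
      push_neg at hEx
      have hy' : ∀ u ≤ t₀, ∀ v ≤ s₀ - Δ,
          y (((0:ℕ) : ZMod n) + ((u:ℕ) : ZMod n)) ≠ ((Δ:ℕ) : ZMod n) + ((v:ℕ) : ZMod n) := by
        intro u hu v hv heq
        have hc1 : ((0:ℕ) : ZMod n) + ((u:ℕ) : ZMod n) = ((u:ℕ) : ZMod n) := by push_cast; ring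
        have hc2 : ((Δ:ℕ) : ZMod n) + ((v:ℕ) : ZMod n) = ((Δ+v:ℕ) : ZMod n) := by push_cast; ring
        rw [hc1, hc2] at heq
        have hφ : phiv n y u = Δ + v := by
          rw [phiv, heq, ZMod.val_cast_of_lt (by omega)]
        by_cases hφβ : phiv n y u < β
        · have h8 := hEx u hu (by omega)
          omega
        · exact hemp u (by omega) (Or.inl (by omega)) ⟨by omega, by omega⟩
      have hbox := box hDeq ((0:ℕ) : ZMod n) ((Δ:ℕ) : ZMod n) t₀ (s₀ - Δ) hy'
      have hc1 : ((0:ℕ) : ZMod n) + ((t₀:ℕ) : ZMod n) = ((t₀:ℕ) : ZMod n) := by push_cast; ring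
      have hc2 : ((Δ:ℕ) : ZMod n) + ((s₀-Δ:ℕ) : ZMod n) = ((s₀:ℕ) : ZMod n) := by
        rw [show ((Δ:ℕ) : ZMod n) + ((s₀-Δ:ℕ) : ZMod n) = ((Δ+(s₀-Δ):ℕ) : ZMod n) by push_cast; ring,
          show Δ+(s₀-Δ) = s₀ by omega]
      have hc3 : ((0:ℕ) : ZMod n) - 1 = (-1 : ZMod n) := by push_cast; ring
      rw [hc1, hc2, hc3] at hbox
      have h5 := hDpos ((t₀:ℕ) : ZMod n) (((Δ:ℕ) : ZMod n) - 1)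
      have h6 := hmh s₀ hs1 hs2
      omega

end GridAux

/-- Lemma 3.6: if `(a, b, y)` is A-plausible and `D ∈ 𝒟⁺(x, y)` has `A(D) = a`, `B(D) = b`,
then `D = E ∗ R` for some A-witness `R`, which may moreover be chosen to minimize
`(ω, τ)` lexicographically among all A-witnesses. -/
theorem exists_witness_decomposition (n : ℕ) (hn : 1 ≤ n)
    (x y : Equiv.Perm (ZMod n))
    (a : {j : ZMod n // j ≠ (n : ZMod n) - 1} → ℕ)
    (b : {i : ZMod n // i ≠ (n : ZMod n) - 1} → ℕ)
    (hA : APlausible n a y)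
    (D : ZMod n → ZMod n → ℤ) (hD : IsGridPosDomain n x y D)
    (hAeq : ∀ j, colA n D j = (a j : ℤ)) (hBeq : ∀ i, rowB n D i = (b i : ℤ)) :
    ∃ (z : Equiv.Perm (ZMod n)) (E R : ZMod n → ZMod n → ℤ),
      IsGridPosDomain n x z E ∧ AWitness n a y z R ∧ E + R = D ∧
      ∀ (z' : Equiv.Perm (ZMod n)) (R' : ZMod n → ZMod n → ℤ), AWitness n a y z' R' →
        omegaR n R < omegaR n R' ∨ (omegaR n R = omegaR n R' ∧ tauR n R ≤ tauR n R') := by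
  classical
  haveI : NeZero n := ⟨by omega⟩
  obtain ⟨z₀, R₀, hW₀⟩ := hA
  rcases Nat.lt_or_ge n 2 with hn1 | hn2
  · exfalso
    obtain ⟨i₁, i₂, hne, _⟩ := hW₀.1.2
    have hv1 := ZMod.val_lt i₁
    have hv2 := ZMod.val_lt i₂
    exact hne (ZMod.val_injective n (by omega))
  obtain ⟨q₀, p₀, hnw₀, _, _⟩ := GridAux.witness_NW hn2 y z₀ a D hAeq R₀ hW₀
  set W : ℕ → Prop := fun d => ∃ q p, GridAux.NW n y D q p ∧ p - q = d with hWdef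
  have hW0 : W (p₀ - q₀) := ⟨q₀, p₀, hnw₀, rfl⟩
  have hbound : p₀ - q₀ ≤ n := by have := hnw₀.2.1; omega
  have hWd : W (Nat.findGreatest W n) := Nat.findGreatest_spec hbound hW0
  obtain ⟨q, p, hnw, hd⟩ := hWd
  have hmax : ∀ q' p', GridAux.NW n y D q' p' → p' - q' ≤ p - q := by
    intro q' p' h
    have h1 : W (p' - q') := ⟨q', p', h, rfl⟩
    have h2 := Nat.le_findGreatest (show p' - q' ≤ n by have := h.2.1; omega) h1
    omega
  obtain ⟨hWit, htau, homega, hsupp⟩ := GridAux.NW_witness hn2 y a D hAeq hnw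
  set β := GridAux.phiv n y q with hβ
  set α := GridAux.phiv n y p with hα
  set R := GridAux.stdR n q p β α with hR
  set z := y * Equiv.swap ((p:ℕ) : ZMod n) ((q:ℕ) : ZMod n) with hz
  obtain ⟨⟨hcornerD, hDeq⟩, hDpos⟩ := hD
  have hcornerD' : D (-1) (-1) = 0 := by
    rw [← GridAux.en (n := n) (by omega)]; exact hcornerD
  have hposclaim := GridAux.max_NW_pos hn2 x y D hDeq hDpos hcornerD' hnw hmax
  have hRcorner : R ((n : ZMod n) - 1) ((n : ZMod n) - 1) = 0 := hWit.1.1.1.1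
  have hReq := hWit.1.1.1.2
  refine ⟨z, (fun i j => D i j - R i j), R, ⟨⟨?_, ?_⟩, ?_⟩, hWit, ?_, ?_⟩
  · -- corner of E
    show D ((n : ZMod n) - 1) ((n : ZMod n) - 1) - R ((n : ZMod n) - 1) ((n : ZMod n) - 1) = 0
    rw [hcornerD, hRcorner]; ring
  · -- domain equation for E
    intro i j
    have h1 := hDeq i j
    have h2 := hReq i j
    show D i j - R i j - (D (i-1) j - R (i-1) j) - (D i (j-1) - R i (j-1))
        + (D (i-1) (j-1) - R (i-1) (j-1)) =
      (if x i = j then 1 else 0) - (if z i = j then 1 else 0)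
    linear_combination h1 - h2
  · -- positivity of E
    intro i j
    show 0 ≤ D i j - R i j
    by_cases hR0 : R i j = 0
    · rw [hR0]
      have := hDpos i j; omega
    · obtain ⟨⟨hcol, hrow1, hrow2⟩, hR1⟩ := hsupp i j hR0
      have h1 := hposclaim i.val j.val (ZMod.val_lt i) hcol hrow1 hrow2
      rw [GridAux.cast_val_eq, GridAux.cast_val_eq] at h1
      rw [hR1]; omega
  · -- E + R = D
    funext i j
    simp only [Pi.add_apply]
    ring
  · -- minimality
    intro z' R' hW'
    obtain ⟨q', p', hnw', htau', homega'⟩ := GridAux.witness_NW hn2 y z' a D hAeq R' hW'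
    have hle := hmax q' p' hnw'
    have hb1 := hnw.1
    have hb2 := hnw.2.1
    have hb3 := hnw'.1
    have hb4 := hnw'.2.1
    have h1 : omegaR n R ≤ omegaR n R' := by rw [homega, homega']; omega
    rcases eq_or_lt_of_le h1 with he | hl
    · right
      exact ⟨he, by rw [htau, htau']; omega⟩
    · left; exact hl
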